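/- The sum Σ_{d=1}^{∞} f_q(d)/d, with f_q(d) = μ(d)²·[gcd(d,2q)=1]·Π_{p|d} 1/(p−2), converges and equals q / ((2,q)·φ(q)·C₂·H(q)), where C₂ = Π_{p>2}(1 − 1/(p−1)²), H(q) = Π_{p|q, p>2}(p−1)/(p−2), and (2,q) = gcd(2,q). -/

import Mathlib

noncomputable def Hfun (k : ℕ) : ℝ :=
  ∏ p ∈ k.primeFactors.filter (fun p => 2 < p), ((p : ℝ) - 1) / ((p : ℝ) - 2)

noncomputable def fq (q d : ℕ) : ℝ :=
  if Squarefree d ∧ Nat.gcd d (2 * q) = 1 then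
    ∏ p ∈ d.primeFactors, 1 / ((p : ℝ) - 2) else 0

noncomputable def C2 : ℝ :=
  ∏' p : {p : ℕ // p.Prime ∧ 2 < p}, (1 - 1 / ((p.1 : ℝ) - 1) ^ 2)

/-! The series has nonnegative multiplicative terms with `f_q(d)^2 ≤ 3 / d`: every prime
factor `p ≥ 5` of `d` satisfies `p ≤ (p - 2)^2`, only `p = 3` costs the factor `3`. Hence it converges like `∑ d^(-3/2)` and has an Euler product, whose
factor is `1 + 1/(p(p - 2))` at odd primes `p ∤ q` and `1` at all other primes. For `q = 1`
these factors are exactly the reciprocals of those of `C₂`, so `C₂ = (∑ f₁(d)/d)⁻¹`; for general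
`q` the finitely many factors at odd `p ∣ q` drop out, and Euler's formula for `φ(q)` turns
`(2, q) φ(q) H(q)` into `q ∏_{p ∣ q, p > 2} (1 + 1/(p(p - 2)))`. -/

open Finset

lemma fq_zero (q : ℕ) : fq q 0 = 0 := by
  simp [fq]

lemma fq_one (q : ℕ) : fq q 1 = 1 := by
  simp [fq]

lemma three_le_of_mem_primeFactors {q d p : ℕ} (hd : Nat.Coprime d (2 * q))
    (hp : p ∈ d.primeFactors) : 3 ≤ p := by
  have hp2 : p ≠ 2 := by
    rintro rfl
    exact Nat.prime_two.one_lt.ne' <| Nat.eq_one_of_dvd_one <|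
      hd ▸ Nat.dvd_gcd (Nat.dvd_of_mem_primeFactors hp) (dvd_mul_right 2 q)
  have := (Nat.prime_of_mem_primeFactors hp).two_le
  omega

lemma fq_nonneg (q d : ℕ) : 0 ≤ fq q d := by
  unfold fq
  split_ifs with h
  · refine prod_nonneg fun p hp => ?_
    have : (3 : ℝ) ≤ p := by exact_mod_cast three_le_of_mem_primeFactors h.2 hp
    exact div_nonneg zero_le_one (by linarith)
  · exact le_rfl

lemma fq_mul (q : ℕ) {m n : ℕ} (h : Nat.Coprime m n) : fq q (m * n) = fq q m * fq q n := by
  rcases eq_or_ne m 0 with rfl | hm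
  · simp [fq_zero]
  rcases eq_or_ne n 0 with rfl | hn
  · simp [fq_zero]
  have hiff : (Squarefree (m * n) ∧ Nat.Coprime (m * n) (2 * q)) ↔
      (Squarefree m ∧ Nat.Coprime m (2 * q)) ∧ (Squarefree n ∧ Nat.Coprime n (2 * q)) := by
    rw [Nat.squarefree_mul h, Nat.coprime_mul_iff_left]
    tauto
  unfold fq
  by_cases hmn : Squarefree (m * n) ∧ Nat.Coprime (m * n) (2 * q)
  · obtain ⟨hm', hn'⟩ := hiff.mp hmn
    rw [if_pos hmn, if_pos hm', if_pos hn', Nat.primeFactors_mul hm hn,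
      prod_union h.disjoint_primeFactors]
  · rw [if_neg hmn]
    rw [hiff, not_and_or] at hmn
    rcases hmn with h' | h' <;> simp [h']

lemma prod_le_three_mul_sq_prod_sub_two {s : Finset ℕ} (hs : ∀ p ∈ s, 3 ≤ p) :
    ∏ p ∈ s, (p : ℝ) ≤ 3 * (∏ p ∈ s, ((p : ℝ) - 2)) ^ 2 := by
  have hle : ∀ p ∈ s.erase 3, (p : ℝ) ≤ ((p : ℝ) - 2) ^ 2 := fun p hp => by
    have : (4 : ℝ) ≤ p := by
      have := hs p (mem_of_mem_erase hp); have := ne_of_mem_erase hp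
      exact_mod_cast (show 4 ≤ p by omega)
    nlinarith
  have hrest : ∏ p ∈ s.erase 3, (p : ℝ) ≤ (∏ p ∈ s.erase 3, ((p : ℝ) - 2)) ^ 2 := by
    rw [← prod_pow]
    exact prod_le_prod (fun p _ => Nat.cast_nonneg p) hle
  by_cases h3 : 3 ∈ s
  · rw [← mul_prod_erase s _ h3, ← mul_prod_erase s _ h3]
    norm_num
    linarith
  · rw [erase_eq_of_notMem h3] at hrest
    nlinarith [sq_nonneg (∏ p ∈ s, ((p : ℝ) - 2))]

lemma fq_sq_le (q d : ℕ) : fq q d ^ 2 ≤ 3 / d := by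
  unfold fq
  split_ifs with h
  · obtain ⟨hsq, hcop⟩ := h
    have hpos : 0 < ∏ p ∈ d.primeFactors, ((p : ℝ) - 2) := prod_pos fun p hp => by
      have : (3 : ℝ) ≤ p := by exact_mod_cast three_le_of_mem_primeFactors hcop hp
      linarith
    have hd : (d : ℝ) = ∏ p ∈ d.primeFactors, (p : ℝ) := by
      rw [← Nat.cast_prod, Nat.prod_primeFactors_of_squarefree hsq]
    rw [prod_div_distrib, prod_const_one, div_pow, one_pow, div_le_div_iff₀ (by positivity)
      (by rw [hd]; exact prod_pos fun p hp => Nat.cast_pos.mpr (Nat.pos_of_mem_primeFactors hp)),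
      one_mul, hd]
    exact prod_le_three_mul_sq_prod_sub_two fun p hp => three_le_of_mem_primeFactors hcop hp
  · rw [zero_pow two_ne_zero]
    positivity

lemma summable_fq_div (q : ℕ) : Summable fun d : ℕ => fq q d / d := by
  refine Summable.of_nonneg_of_le (fun d => div_nonneg (fq_nonneg q d) d.cast_nonneg)
    (fun d => ?_) ((Real.summable_nat_rpow_inv.mpr (by norm_num : (1 : ℝ) < 3 / 2)).mul_left √3)
  rcases eq_or_ne d 0 with rfl | hd
  · simp [fq_zero]
  have hd : (0 : ℝ) < d := by positivity
  have hfq : fq q d ≤ √3 / √d := by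
    rw [← Real.sqrt_div' _ hd.le, Real.le_sqrt (fq_nonneg q d) (by positivity)]
    exact fq_sq_le q d
  have hpow : (d : ℝ) ^ (3 / 2 : ℝ) = √d * d := by
    rw [show (3 / 2 : ℝ) = 1 / 2 + 1 by norm_num, Real.rpow_add hd, Real.rpow_one,
      Real.sqrt_eq_rpow]
  calc fq q d / d ≤ √3 / √d / d := by gcongr
    _ = √3 * ((d : ℝ) ^ (3 / 2 : ℝ))⁻¹ := by rw [hpow]; field_simp

lemma fq_prime {q p : ℕ} (hp : p.Prime) :
    fq q p = if p ∣ 2 * q then 0 else 1 / ((p : ℝ) - 2) := by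
  unfold fq
  rw [hp.primeFactors, prod_singleton]
  have hcop : Nat.Coprime p (2 * q) ↔ ¬ p ∣ 2 * q := hp.coprime_iff_not_dvd
  by_cases h : p ∣ 2 * q
  · rw [if_pos h, if_neg fun h' => hcop.mp h'.2 h]
  · rw [if_neg h, if_pos ⟨hp.squarefree, hcop.mpr h⟩]

lemma tsum_fq_prime_pow_div (q : ℕ) {p : ℕ} (hp : p.Prime) :
    ∑' e : ℕ, fq q (p ^ e) / ((p ^ e : ℕ) : ℝ) = 1 + fq q p / p := by
  rw [tsum_eq_sum (s := range 2) fun e he => ?_]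
  · simp [sum_range_succ, fq_one]
  have hsq : ¬ Squarefree (p ^ e) := fun h =>
    hp.not_isUnit <| h p <| by
      rw [← sq]; exact pow_dvd_pow p (by simpa using he : 1 < e)
  simp [fq, hsq]

noncomputable def eulerFactor (p : ℕ) : ℝ := 1 + 1 / ((p : ℝ) * (p - 2))

lemma eulerFactor_pos {p : ℕ} (hp : 2 < p) : 0 < eulerFactor p := by
  have hp' : (2 : ℝ) < p := by exact_mod_cast hp
  have : 0 < (p : ℝ) * (p - 2) := mul_pos (by linarith) (by linarith)
  rw [eulerFactor]
  positivity

lemma inv_eulerFactor {p : ℕ} (hp : 2 < p) : (eulerFactor p)⁻¹ = 1 - 1 / ((p : ℝ) - 1) ^ 2 := by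
  have hp' : (2 : ℝ) < p := by exact_mod_cast hp
  have h1 : (p : ℝ) - 1 ≠ 0 := by linarith
  have h2 : (p : ℝ) - 2 ≠ 0 := by linarith
  rw [eulerFactor, show 1 + 1 / ((p : ℝ) * (p - 2)) = ((p : ℝ) - 1) ^ 2 / (p * (p - 2)) by
    field_simp; ring, inv_div]
  field_simp
  ring

lemma one_add_fq_prime_div (q : ℕ) {p : ℕ} (hp : p.Prime) :
    1 + fq q p / p = if p ∣ 2 * q then 1 else eulerFactor p := by
  rw [fq_prime hp, eulerFactor]
  split_ifs
  · simp
  · rw [div_div, mul_comm ((p : ℝ) - 2)]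

lemma hasProd_ite_dvd {α : Type*} [CommMonoid α] [TopologicalSpace α] {q : ℕ} (hq : q ≠ 0)
    (f : ℕ → α) :
    HasProd (fun p : {p : ℕ // p.Prime ∧ 2 < p} => if p.1 ∣ q then f p else 1)
      (∏ p ∈ q.primeFactors.filter (2 < ·), f p) := by
  let g : ℕ → α := fun n => if n ∣ q then f n else 1
  let S : Set ℕ := {p | p.Prime ∧ 2 < p}
  change HasProd (g ∘ Subtype.val (p := (· ∈ S))) _
  have hval : ∏ p ∈ q.primeFactors.filter (2 < ·), S.mulIndicator g p =
      ∏ p ∈ q.primeFactors.filter (2 < ·), f p := by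
    refine prod_congr rfl fun p hp => ?_
    rw [mem_filter, Nat.mem_primeFactors] at hp
    rw [Set.mulIndicator_of_mem (show p ∈ S from ⟨hp.1.1, hp.2⟩)]
    exact if_pos hp.1.2.1
  have hone : ∀ n ∉ q.primeFactors.filter (2 < ·), S.mulIndicator g n = 1 := fun n hn => by
    by_cases hS : n ∈ S
    · rw [Set.mulIndicator_of_mem hS]
      exact if_neg fun hnq =>
        hn (mem_filter.mpr ⟨Nat.mem_primeFactors.mpr ⟨hS.1, hnq, hq⟩, hS.2⟩)
    · exact Set.mulIndicator_of_notMem hS g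
  rw [hasProd_subtype_iff_mulIndicator, ← hval]
  exact hasProd_prod_of_ne_finset_one hone

lemma hasProd_eulerFactor (q : ℕ) :
    HasProd (fun p : {p : ℕ // p.Prime ∧ 2 < p} => if p.1 ∣ q then 1 else eulerFactor p)
      (∑' d : ℕ, fq q d / d) := by
  have hEuler := EulerProduct.eulerProduct_hasProd_mulIndicator (f := fun d : ℕ => fq q d / d)
    (by simp [fq_one]) (fun h => by rw [fq_mul q h, Nat.cast_mul, div_mul_div_comm])
    ((summable_fq_div q).congr fun d => (Real.norm_of_nonneg
      (div_nonneg (fq_nonneg q d) d.cast_nonneg)).symm) (by simp [fq_zero])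
  let g : ℕ → ℝ := fun n => if n ∣ q then 1 else eulerFactor n
  -- the Euler factor at `p = 2` is trivial
  have hmul : {p : ℕ | p.Prime}.mulIndicator (fun p => ∑' e : ℕ, fq q (p ^ e) / ((p ^ e : ℕ) : ℝ))
      = {p : ℕ | p.Prime ∧ 2 < p}.mulIndicator g := by
    ext n
    by_cases hn : n.Prime
    · rw [Set.mulIndicator_of_mem (show n ∈ {p : ℕ | p.Prime} from hn),
        tsum_fq_prime_pow_div q hn, one_add_fq_prime_div q hn]
      rcases hn.eq_two_or_odd with rfl | hodd
      · simp
      · have h2 : 2 < n := by have := hn.two_le; omega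
        have hcop : Nat.Coprime n 2 := (Nat.coprime_primes hn Nat.prime_two).mpr h2.ne'
        rw [Set.mulIndicator_of_mem (show n ∈ {p : ℕ | p.Prime ∧ 2 < p} from ⟨hn, h2⟩)]
        simp only [g, hcop.dvd_mul_left]
    · rw [Set.mulIndicator_of_notMem (show n ∉ {p : ℕ | p.Prime} from hn),
        Set.mulIndicator_of_notMem fun h => hn h.1]
  rw [hmul, ← hasProd_subtype_iff_mulIndicator] at hEuler
  exact hEuler

lemma tsum_fq_one_div_eq {q : ℕ} (hq : q ≠ 0) :
    ∑' d : ℕ, fq 1 d / d =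
      (∑' d : ℕ, fq q d / d) * ∏ p ∈ q.primeFactors.filter (2 < ·), eulerFactor p := by
  refine (hasProd_eulerFactor 1).unique ?_
  convert (hasProd_eulerFactor q).mul (hasProd_ite_dvd hq eulerFactor) using 1
  ext p
  have hp1 : ¬ p.1 ∣ 1 := p.2.1.not_dvd_one
  split_ifs <;> simp

lemma one_le_tsum_fq_div (q : ℕ) : 1 ≤ ∑' d : ℕ, fq q d / d := by
  simpa [fq_one] using (summable_fq_div q).le_tsum 1
    fun d _ => div_nonneg (fq_nonneg q d) d.cast_nonneg

lemma C2_eq_inv_tsum : C2 = (∑' d : ℕ, fq 1 d / d)⁻¹ := by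
  have hpos : 0 < ∑' d : ℕ, fq 1 d / d := one_pos.trans_le (one_le_tsum_fq_div 1)
  rw [← ((hasProd_eulerFactor 1).inv₀ hpos.ne').tprod_eq, C2]
  refine tprod_congr fun p => ?_
  rw [if_neg p.2.1.not_dvd_one, inv_eulerFactor p.2.2]

lemma gcd_two_mul_prod_filter_not {q : ℕ} (hq : q ≠ 0) :
    (Nat.gcd 2 q : ℝ) * ∏ p ∈ q.primeFactors.filter (¬ 2 < ·), (1 - (p : ℝ)⁻¹) = 1 := by
  by_cases h2 : 2 ∣ q
  · have hF : q.primeFactors.filter (¬ 2 < ·) = {2} := by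
      ext p
      simp only [mem_filter, Nat.mem_primeFactors, mem_singleton]
      constructor
      · rintro ⟨⟨hp, -, -⟩, hle⟩
        have := hp.two_le
        omega
      · rintro rfl
        exact ⟨⟨Nat.prime_two, h2, hq⟩, by omega⟩
    rw [hF, Nat.gcd_eq_left h2]
    norm_num
  · have hF : q.primeFactors.filter (¬ 2 < ·) = ∅ := by
      refine filter_eq_empty_iff.mpr fun p hp hle => ?_
      rw [Nat.mem_primeFactors] at hp
      obtain rfl : p = 2 := by have := hp.1.two_le; omega
      exact h2 hp.2.1
    rw [hF, prod_empty, Nat.Coprime.gcd_eq_one ((Nat.prime_two.coprime_iff_not_dvd).mpr h2)]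
    norm_num

lemma gcd_two_mul_totient_mul_Hfun {q : ℕ} (hq : q ≠ 0) :
    (Nat.gcd 2 q : ℝ) * Nat.totient q * Hfun q =
      q * ∏ p ∈ q.primeFactors.filter (2 < ·), eulerFactor p := by
  have htot : (Nat.totient q : ℝ) = q * ∏ p ∈ q.primeFactors, (1 - (p : ℝ)⁻¹) := by
    have := congrArg (Rat.cast : ℚ → ℝ) (Nat.totient_eq_mul_prod_factors q)
    push_cast at this
    exact this
  have hH : Hfun q = ∏ p ∈ q.primeFactors.filter (2 < ·),
      (1 - (p : ℝ)⁻¹)⁻¹ * eulerFactor p := by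
    refine prod_congr rfl fun p hp => ?_
    have hp' : (2 : ℝ) < p := by exact_mod_cast (mem_filter.mp hp).2
    have h1 : (p : ℝ) - 1 ≠ 0 := by linarith
    have h2 : (p : ℝ) - 2 ≠ 0 := by linarith
    rw [eulerFactor]
    field_simp
    ring
  have hcancel : (∏ p ∈ q.primeFactors.filter (2 < ·), (1 - (p : ℝ)⁻¹)) *
      ∏ p ∈ q.primeFactors.filter (2 < ·), (1 - (p : ℝ)⁻¹)⁻¹ = 1 := by
    rw [← prod_mul_distrib]
    refine prod_eq_one fun p hp => mul_inv_cancel₀ ?_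
    have hp' : (2 : ℝ) < p := by exact_mod_cast (mem_filter.mp hp).2
    have : (p : ℝ)⁻¹ < 1 := inv_lt_one_of_one_lt₀ (by linarith)
    linarith
  rw [htot, hH, prod_mul_distrib, ← prod_filter_mul_prod_filter_not q.primeFactors (2 < ·)]
  linear_combination (q : ℝ) * (∏ p ∈ q.primeFactors.filter (2 < ·), eulerFactor p) *
    ((Nat.gcd 2 q : ℝ) * (∏ p ∈ q.primeFactors.filter (¬ 2 < ·), (1 - (p : ℝ)⁻¹)) * hcancel +
      gcd_two_mul_prod_filter_not hq)

theorem stmt12 : ∀ q : ℕ, 0 < q →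
    Summable (fun d : ℕ => fq q d / d) ∧
    ∑' d : ℕ, fq q d / d =
      q / ((Nat.gcd 2 q : ℝ) * (Nat.totient q : ℝ) * C2 * Hfun q) := by
  intro q hq
  refine ⟨summable_fq_div q, ?_⟩
  have hP : 0 < ∏ p ∈ q.primeFactors.filter (2 < ·), eulerFactor p :=
    prod_pos fun p hp => eulerFactor_pos (mem_filter.mp hp).2
  have hT : 0 < ∑' d : ℕ, fq q d / d := one_pos.trans_le (one_le_tsum_fq_div q)
  rw [C2_eq_inv_tsum, tsum_fq_one_div_eq hq.ne',
    show ∀ a b c d : ℝ, a * b * c * d = a * b * d * c by intros; ring,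
    gcd_two_mul_totient_mul_Hfun hq.ne']
  field_simp
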